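/- arXiv:2408.14193 — 3 statements merged into one kernel-verified Lean document; each statement's English description precedes it below -/
import Mathlib

section
/- Let A and B be n×n Hermitian complex matrices, and for a Hermitian matrix M let λ₁(M) ≥ λ₂(M) ≥ … ≥ λ_n(M) denote its eigenvalues in decreasing order. Then for every k, λ_k(A) + λ_n(B) ≤ λ_k(A+B) ≤ λ_k(A) + λ₁(B) (Weyl's inequality); consequently |λ_k(A+B) − λ_k(A)| ≤ ‖B‖ for every k, where ‖·‖ is the ℓ²-operator norm. -/
/-!
Let `x ≠ 0` lie both in the span of the eigenvectors of `A` for `λ₁(A), …, λ_k(A)` and in the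
span of the eigenvectors of `A + B` for `λ_k(A + B), …, λ_n(A + B)`; such an `x` exists because
the dimensions `k` and `n - k + 1` add up to more than `n`. Expanding in the two eigenbases, the
Rayleigh quotient of `A` at `x` is at least `λ_k(A)` and that of `A + B` is at most `λ_k(A + B)`,
so `λ_k(A) + m ≤ λ_k(A + B)` for every lower bound `m` of the Rayleigh quotient of `B`, such as
`λ_n(B)` or `-‖B‖`. Exchanging the roles of `A` and `A + B` (and replacing `B` by `-B`) gives
the upper bounds.
-/

open Matrix Module Submodule
open scoped InnerProductSpace Matrix.Norms.L2Operator

theorem Module.Basis.exists_ne_zero_mem_span_image_inter {ι K V : Type*} [Fintype ι] [Field K]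
    [AddCommGroup V] [Module K V] (b c : Basis ι K V) {s t : Finset ι}
    (hst : Fintype.card ι < s.card + t.card) :
    ∃ x ≠ 0, x ∈ span K (b '' s) ∧ x ∈ span K (c '' t) := by
  have := b.finiteDimensional_of_finite
  have finrank_span : ∀ (d : Basis ι K V) (r : Finset ι), finrank K (span K (d '' r)) = r.card := by
    intro d r
    rw [Set.image_eq_range, finrank_span_eq_card (b := fun i : (r : Set ι) => d i)
        (d.linearIndependent.comp _ Subtype.val_injective)]
    simp
  have hnd : ¬ Disjoint (span K (b '' s)) (span K (c '' t)) := fun h => by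
    have := finrank_add_finrank_le_of_disjoint h
    rw [finrank_span, finrank_span, finrank_eq_card_basis b] at this
    omega
  rw [Submodule.disjoint_def] at hnd
  push Not at hnd
  obtain ⟨x, hb, hc, hx⟩ := hnd
  exact ⟨x, hx, hb, hc⟩

namespace OrthonormalBasis

variable {𝕜 E ι : Type*} [RCLike 𝕜] [NormedAddCommGroup E] [InnerProductSpace 𝕜 E] [Fintype ι]

theorem norm_sq_eq_sum (u : OrthonormalBasis ι 𝕜 E) (x : E) : ‖x‖ ^ 2 = ∑ i, ‖u.repr x i‖ ^ 2 := by
  rw [← u.repr.norm_map, EuclideanSpace.norm_sq_eq]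

theorem repr_eq_zero_of_mem_span_image (u : OrthonormalBasis ι 𝕜 E) {s : Set ι} {x : E}
    (hx : x ∈ span 𝕜 (u '' s)) {i : ι} (hi : i ∉ s) : u.repr x i = 0 := by
  rw [← u.coe_toBasis, u.toBasis.mem_span_image] at hx
  rw [← u.coe_toBasis_repr_apply]
  exact Finsupp.notMem_support_iff.mp fun h => hi (hx h)

theorem mem_span_image_univ (u : OrthonormalBasis ι 𝕜 E) (x : E) :
    x ∈ span 𝕜 (u '' Set.univ) := by
  rw [Set.image_univ, ← u.coe_toBasis, u.toBasis.span_eq]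
  exact mem_top

variable {T : E →ₗ[𝕜] E} (u : OrthonormalBasis ι 𝕜 E) {a : ι → ℝ}
  (hu : ∀ i, T (u i) = (a i : 𝕜) • u i)
include hu

theorem repr_apply_eq_mul_of_apply_eq_smul (x : E) (i : ι) :
    u.repr (T x) i = a i * u.repr x i := by
  classical
  conv_lhs => rw [← u.sum_repr x]
  simp [map_sum, hu, smul_smul, mul_comm, Pi.single_apply]

theorem re_inner_apply_self_eq_sum (x : E) :
    RCLike.re ⟪x, T x⟫_𝕜 = ∑ i, a i * ‖u.repr x i‖ ^ 2 := by
  rw [← u.repr.inner_map_map, PiLp.inner_apply, map_sum]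
  refine Finset.sum_congr rfl fun i _ => ?_
  rw [u.repr_apply_eq_mul_of_apply_eq_smul hu, RCLike.inner_apply, mul_assoc, RCLike.mul_conj]
  norm_cast

theorem mul_norm_sq_le_re_inner_apply_self {s : Set ι} {x : E} (hx : x ∈ span 𝕜 (u '' s))
    {μ : ℝ} (hμ : ∀ i ∈ s, μ ≤ a i) : μ * ‖x‖ ^ 2 ≤ RCLike.re ⟪x, T x⟫_𝕜 := by
  rw [u.re_inner_apply_self_eq_sum hu, u.norm_sq_eq_sum, Finset.mul_sum]
  refine Finset.sum_le_sum fun i _ => ?_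
  by_cases hi : i ∈ s
  · exact mul_le_mul_of_nonneg_right (hμ i hi) (by positivity)
  · simp [u.repr_eq_zero_of_mem_span_image hx hi]

theorem re_inner_apply_self_le_mul_norm_sq {s : Set ι} {x : E} (hx : x ∈ span 𝕜 (u '' s))
    {μ : ℝ} (hμ : ∀ i ∈ s, a i ≤ μ) : RCLike.re ⟪x, T x⟫_𝕜 ≤ μ * ‖x‖ ^ 2 := by
  rw [u.re_inner_apply_self_eq_sum hu, u.norm_sq_eq_sum, Finset.mul_sum]
  refine Finset.sum_le_sum fun i _ => ?_
  by_cases hi : i ∈ s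
  · exact mul_le_mul_of_nonneg_right (hμ i hi) (by positivity)
  · simp [u.repr_eq_zero_of_mem_span_image hx hi]

theorem iInf_mul_norm_sq_le_re_inner_apply_self (x : E) :
    (⨅ i, a i) * ‖x‖ ^ 2 ≤ RCLike.re ⟪x, T x⟫_𝕜 :=
  u.mul_norm_sq_le_re_inner_apply_self hu (u.mem_span_image_univ x)
    fun i _ => ciInf_le (Set.finite_range a).bddBelow i

theorem re_inner_apply_self_le_iSup_mul_norm_sq (x : E) :
    RCLike.re ⟪x, T x⟫_𝕜 ≤ (⨆ i, a i) * ‖x‖ ^ 2 :=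
  u.re_inner_apply_self_le_mul_norm_sq hu (u.mem_span_image_univ x)
    fun i _ => le_ciSup (Set.finite_range a).bddAbove i

end OrthonormalBasis

section Weyl

variable {𝕜 E : Type*} [RCLike 𝕜] [NormedAddCommGroup E] [InnerProductSpace 𝕜 E] {n : ℕ}
  {T S : E →ₗ[𝕜] E} {u v : OrthonormalBasis (Fin n) 𝕜 E} {a c : Fin n → ℝ}

theorem weyl_add_le (ha : Antitone a) (hc : Antitone c) (hu : ∀ i, T (u i) = (a i : 𝕜) • u i)
    (hv : ∀ i, (T + S) (v i) = (c i : 𝕜) • v i) {m : ℝ}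
    (hm : ∀ x, m * ‖x‖ ^ 2 ≤ RCLike.re ⟪x, S x⟫_𝕜) (k : Fin n) : a k + m ≤ c k := by
  obtain ⟨x, hx0, hxu, hxv⟩ := u.toBasis.exists_ne_zero_mem_span_image_inter v.toBasis
    (s := Finset.Iic k) (t := Finset.Ici k)
    (by simp only [Fintype.card_fin, Fin.card_Iic, Fin.card_Ici]; omega)
  have hT : a k * ‖x‖ ^ 2 ≤ RCLike.re ⟪x, T x⟫_𝕜 :=
    u.mul_norm_sq_le_re_inner_apply_self hu hxu fun i hi => ha (by simpa using hi)
  have hTS : RCLike.re ⟪x, (T + S) x⟫_𝕜 ≤ c k * ‖x‖ ^ 2 :=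
    v.re_inner_apply_self_le_mul_norm_sq hv hxv fun i hi => hc (by simpa using hi)
  have hsplit : RCLike.re ⟪x, (T + S) x⟫_𝕜 = RCLike.re ⟪x, T x⟫_𝕜 + RCLike.re ⟪x, S x⟫_𝕜 := by
    simp [inner_add_right]
  refine le_of_mul_le_mul_right ?_ (by positivity : 0 < ‖x‖ ^ 2)
  calc (a k + m) * ‖x‖ ^ 2 = a k * ‖x‖ ^ 2 + m * ‖x‖ ^ 2 := add_mul ..
    _ ≤ RCLike.re ⟪x, T x⟫_𝕜 + RCLike.re ⟪x, S x⟫_𝕜 := add_le_add hT (hm x)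
    _ = RCLike.re ⟪x, (T + S) x⟫_𝕜 := hsplit.symm
    _ ≤ c k * ‖x‖ ^ 2 := hTS

theorem weyl_le_add (ha : Antitone a) (hc : Antitone c) (hu : ∀ i, T (u i) = (a i : 𝕜) • u i)
    (hv : ∀ i, (T + S) (v i) = (c i : 𝕜) • v i) {M : ℝ}
    (hM : ∀ x, RCLike.re ⟪x, S x⟫_𝕜 ≤ M * ‖x‖ ^ 2) (k : Fin n) : c k ≤ a k + M := by
  have hu' : ∀ i, (T + S + -S) (u i) = (a i : 𝕜) • u i := by simpa using hu
  have := weyl_add_le (S := -S) hc ha hv hu' (m := -M) (fun x => by simpa using hM x) k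
  linarith

end Weyl

theorem Matrix.IsHermitian.exists_orthonormalBasis_toEuclideanLin_apply_eq_smul
    {𝕜 ι : Type*} [RCLike 𝕜] [Fintype ι] [DecidableEq ι] {A : Matrix ι ι 𝕜} (hA : A.IsHermitian)
    {a : ι → ℝ} (ha : ∃ σ : Equiv.Perm ι, a = hA.eigenvalues ∘ σ) :
    ∃ u : OrthonormalBasis ι 𝕜 (EuclideanSpace 𝕜 ι),
      ∀ i, toEuclideanLin A (u i) = (a i : 𝕜) • u i := by
  obtain ⟨σ, rfl⟩ := ha
  refine ⟨hA.eigenvectorBasis.reindex σ.symm, fun i => ?_⟩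
  ext j
  simp only [OrthonormalBasis.reindex_apply, Equiv.symm_symm, ofLp_toLpLin, toLin'_apply,
    hA.mulVec_eigenvectorBasis, Pi.smul_apply, WithLp.ofLp_smul, Function.comp_apply,
    RCLike.real_smul_eq_coe_smul (K := 𝕜)]

theorem Matrix.abs_re_inner_toEuclideanLin_self_le {𝕜 ι : Type*} [RCLike 𝕜] [Fintype ι]
    [DecidableEq ι] (A : Matrix ι ι 𝕜) (x : EuclideanSpace 𝕜 ι) :
    |RCLike.re ⟪x, toEuclideanLin A x⟫_𝕜| ≤ ‖A‖ * ‖x‖ ^ 2 :=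
  calc |RCLike.re ⟪x, toEuclideanLin A x⟫_𝕜| ≤ ‖x‖ * ‖toEuclideanLin A x‖ :=
        (RCLike.abs_re_le_norm _).trans (norm_inner_le_norm _ _)
    _ ≤ ‖x‖ * (‖A‖ * ‖x‖) := by gcongr; exact (toEuclideanCLM (n := ι) (𝕜 := 𝕜) A).le_opNorm x
    _ = ‖A‖ * ‖x‖ ^ 2 := by ring

theorem stmt6_general (n : ℕ) (A B : Matrix (Fin n) (Fin n) ℂ)
    (hA : A.IsHermitian) (hB : B.IsHermitian) (hAB : (A + B).IsHermitian)
    (a b c : Fin n → ℝ)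
    (ha₁ : Antitone a) (ha₂ : ∃ σ : Equiv.Perm (Fin n), a = hA.eigenvalues ∘ σ)
    (hb₂ : ∃ σ : Equiv.Perm (Fin n), b = hB.eigenvalues ∘ σ)
    (hc₁ : Antitone c) (hc₂ : ∃ σ : Equiv.Perm (Fin n), c = hAB.eigenvalues ∘ σ) :
    ∀ k : Fin n,
      (a k + ⨅ i, b i ≤ c k) ∧ (c k ≤ a k + ⨆ i, b i) ∧ |c k - a k| ≤ ‖B‖ := by
  intro k
  obtain ⟨u, hu⟩ := hA.exists_orthonormalBasis_toEuclideanLin_apply_eq_smul ha₂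
  obtain ⟨v, hv⟩ := hAB.exists_orthonormalBasis_toEuclideanLin_apply_eq_smul hc₂
  obtain ⟨w, hw⟩ := hB.exists_orthonormalBasis_toEuclideanLin_apply_eq_smul hb₂
  rw [map_add] at hv
  have weyl {m M : ℝ} (hm : ∀ x, m * ‖x‖ ^ 2 ≤ RCLike.re ⟪x, toEuclideanLin B x⟫_ℂ)
      (hM : ∀ x, RCLike.re ⟪x, toEuclideanLin B x⟫_ℂ ≤ M * ‖x‖ ^ 2) :
      a k + m ≤ c k ∧ c k ≤ a k + M :=
    ⟨weyl_add_le ha₁ hc₁ hu hv hm k, weyl_le_add ha₁ hc₁ hu hv hM k⟩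
  obtain ⟨hlow, hupp⟩ := weyl (w.iInf_mul_norm_sq_le_re_inner_apply_self hw)
    (w.re_inner_apply_self_le_iSup_mul_norm_sq hw)
  obtain ⟨hlow', hupp'⟩ := weyl (m := -‖B‖)
    (fun x => neg_mul ‖B‖ _ ▸ neg_le_of_abs_le (abs_re_inner_toEuclideanLin_self_le B x))
    (fun x => le_of_abs_le (abs_re_inner_toEuclideanLin_self_le B x))
  exact ⟨hlow, hupp, abs_sub_le_iff.mpr ⟨by linarith, by linarith⟩⟩

/-- Weyl's inequality: Let `A`, `B` be `n×n` Hermitian complex matrices, and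
let `a`, `b`, `c` be the eigenvalues of `A`, `B`, `A+B` respectively, arranged in decreasing
order (`a k = λ_{k+1}(A)`, etc.; each is an antitone rearrangement of the Mathlib eigenvalue
function). Then for every `k`,
`λ_k(A) + λ_n(B) ≤ λ_k(A+B) ≤ λ_k(A) + λ₁(B)`, where `λ_n(B) = ⨅ i, b i` and
`λ₁(B) = ⨆ i, b i`; consequently `|λ_k(A+B) - λ_k(A)| ≤ ‖B‖` (ℓ²-operator norm). -/
theorem stmt6 (n : ℕ) (A B : Matrix (Fin n) (Fin n) ℂ)
    (hA : A.IsHermitian) (hB : B.IsHermitian) (hAB : (A + B).IsHermitian)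
    (a b c : Fin n → ℝ)
    (ha₁ : Antitone a) (ha₂ : ∃ σ : Equiv.Perm (Fin n), a = hA.eigenvalues ∘ σ)
    (hb₁ : Antitone b) (hb₂ : ∃ σ : Equiv.Perm (Fin n), b = hB.eigenvalues ∘ σ)
    (hc₁ : Antitone c) (hc₂ : ∃ σ : Equiv.Perm (Fin n), c = hAB.eigenvalues ∘ σ) :
    ∀ k : Fin n,
      (a k + ⨅ i, b i ≤ c k) ∧ (c k ≤ a k + ⨆ i, b i) ∧ |c k - a k| ≤ ‖B‖ :=
  stmt6_general n A B hA hB hAB a b c ha₁ ha₂ hb₂ hc₁ hc₂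
end

section
/- Let A₀ ∈ ℂ^{N×N}, let ε ≥ 0, and for l = 1,…,L let U_l, V_l ∈ ℂ^{N×N} be invertible matrices with ‖U_l^{−1}‖ ≤ 1+u_l and ‖V_l^{−1}‖ ≤ 1+v_l (u_l, v_l ≥ 0), and let A_l ∈ ℂ^{N×N} satisfy A_l = U_l A_{l−1} V_l + E_l with ‖E_l‖ ≤ ε. Then the accumulated error of the recursive two-sided factorization satisfies ‖A₀ − (U₁^{−1}U₂^{−1}⋯U_L^{−1}) A_L (V_L^{−1}⋯V₂^{−1}V₁^{−1})‖ ≤ ε · Σ_{l=1}^{L} Π_{j=1}^{l} (1+u_j)(1+v_j), which in particular is at most ε·L·Π_{j=1}^{L}(1+u_j)(1+v_j). -/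
open Matrix
open scoped Matrix.Norms.L2Operator

/-!
Write `Pₗ = U₁⁻¹ ⋯ Uₗ⁻¹` and `Qₗ = Vₗ⁻¹ ⋯ V₁⁻¹`. Conjugating the recursion by `Pₗ` and `Qₗ` gives
`Pₗ Aₗ Qₗ = Pₗ₋₁ Aₗ₋₁ Qₗ₋₁ + Pₗ Eₗ Qₗ`, so `A₀ - P_L A_L Q_L` telescopes to `-∑ₗ Pₗ Eₗ Qₗ`, and
submultiplicativity bounds the `l`-th term by `ε ∏_{j ≤ l} (1 + u_j)(1 + v_j)`.
-/

open Finset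

variable {R : Type*}

section Products

variable [Monoid R] (X : ℕ → R) (n : ℕ)

def ascProd : R := ((List.range n).map fun i => X (i + 1)).prod

def descProd : R := ((List.range n).map fun i => X (n - i)).prod

@[simp]
lemma ascProd_zero : ascProd X 0 = 1 := rfl

@[simp]
lemma descProd_zero : descProd X 0 = 1 := rfl

lemma ascProd_succ : ascProd X (n + 1) = ascProd X n * X (n + 1) := by
  simp [ascProd, List.range_succ]

lemma descProd_succ : descProd X (n + 1) = X (n + 1) * descProd X n := by
  simp only [descProd, List.range_succ_eq_map, List.map_cons, List.map_map, List.prod_cons]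
  congr 2
  exact List.map_congr_left fun i _ => by simp

end Products

section Norms

variable [SeminormedRing R] {X : ℕ → R} {c : ℕ → ℝ} {n : ℕ}

lemma norm_ascProd_le (hn : 1 ≤ n) (hX : ∀ j ∈ Icc 1 n, ‖X j‖ ≤ c j) :
    ‖ascProd X n‖ ≤ ∏ j ∈ Icc 1 n, c j := by
  induction n, hn using Nat.le_induction with
  | base => simpa [ascProd] using hX 1 (by simp)
  | succ n hn ih =>
    rw [ascProd_succ, prod_Icc_succ_top (by omega)]
    exact norm_mul_le_of_le (ih fun j hj => hX j (Icc_subset_Icc_right n.le_succ hj))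
      (hX (n + 1) (by simp))

lemma norm_descProd_le (hn : 1 ≤ n) (hX : ∀ j ∈ Icc 1 n, ‖X j‖ ≤ c j) :
    ‖descProd X n‖ ≤ ∏ j ∈ Icc 1 n, c j := by
  induction n, hn using Nat.le_induction with
  | base => simpa [descProd] using hX 1 (by simp)
  | succ n hn ih =>
    rw [descProd_succ, prod_Icc_succ_top (by omega), mul_comm]
    exact norm_mul_le_of_le (hX (n + 1) (by simp))
      (ih fun j hj => hX j (Icc_subset_Icc_right n.le_succ hj))

end Norms

lemma mul_mul_add_mul_eq_of_mul_eq_one [Semiring R] {p q a e u u' v v' : R}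
    (hu : u' * u = 1) (hv : v * v' = 1) :
    p * u' * (u * a * v + e) * (v' * q) = p * a * q + p * u' * e * (v' * q) := by
  have hcancel : p * u' * (u * a * v) * (v' * q) = p * (u' * u) * a * (v * v') * q := by
    simp only [mul_assoc]
  rw [mul_add, add_mul, hcancel, hu, hv, mul_one, mul_one]

section Telescoping

variable {L : ℕ} {A U V E U' V' : ℕ → R}

lemma sub_ascProd_mul_descProd_eq [Ring R]
    (hU : ∀ l ∈ Icc 1 L, U' l * U l = 1) (hV : ∀ l ∈ Icc 1 L, V l * V' l = 1)
    (hrec : ∀ l ∈ Icc 1 L, A l = U l * A (l - 1) * V l + E l) :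
    A 0 - ascProd U' L * A L * descProd V' L =
      -∑ l ∈ Icc 1 L, ascProd U' l * E l * descProd V' l := by
  suffices ∀ n ≤ L, A 0 - ascProd U' n * A n * descProd V' n =
      -∑ l ∈ Icc 1 n, ascProd U' l * E l * descProd V' l from this L le_rfl
  intro n hn
  induction n with
  | zero => simp
  | succ n ih =>
    have hmem : n + 1 ∈ Icc 1 L := mem_Icc.mpr ⟨by omega, hn⟩
    have hstep : ascProd U' (n + 1) * A (n + 1) * descProd V' (n + 1) =
        ascProd U' n * A n * descProd V' n +
          ascProd U' (n + 1) * E (n + 1) * descProd V' (n + 1) := by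
      rw [ascProd_succ, descProd_succ, hrec _ hmem]
      exact mul_mul_add_mul_eq_of_mul_eq_one (hU _ hmem) (hV _ hmem)
    rw [hstep, sum_Icc_succ_top (by omega), ← sub_sub, ih (by omega)]
    abel

theorem norm_sub_ascProd_mul_descProd_le [SeminormedRing R] {ε : ℝ} {a b : ℕ → ℝ}
    (hU : ∀ l ∈ Icc 1 L, U' l * U l = 1) (hV : ∀ l ∈ Icc 1 L, V l * V' l = 1)
    (ha : ∀ l ∈ Icc 1 L, ‖U' l‖ ≤ a l) (hb : ∀ l ∈ Icc 1 L, ‖V' l‖ ≤ b l)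
    (hrec : ∀ l ∈ Icc 1 L, A l = U l * A (l - 1) * V l + E l)
    (hE : ∀ l ∈ Icc 1 L, ‖E l‖ ≤ ε) :
    ‖A 0 - ascProd U' L * A L * descProd V' L‖ ≤
      ε * ∑ l ∈ Icc 1 L, ∏ j ∈ Icc 1 l, a j * b j := by
  rw [sub_ascProd_mul_descProd_eq hU hV hrec, norm_neg, mul_sum]
  refine (norm_sum_le _ _).trans (sum_le_sum fun l hl => ?_)
  obtain ⟨hl1, hlL⟩ := mem_Icc.mp hl
  have hsub : Icc 1 l ⊆ Icc 1 L := Icc_subset_Icc_right hlL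
  calc ‖ascProd U' l * E l * descProd V' l‖
      ≤ (∏ j ∈ Icc 1 l, a j) * ε * ∏ j ∈ Icc 1 l, b j :=
        norm_mul_le_of_le (norm_mul_le_of_le (norm_ascProd_le hl1 fun j hj => ha j (hsub hj))
          (hE l hl)) (norm_descProd_le hl1 fun j hj => hb j (hsub hj))
    _ = ε * ∏ j ∈ Icc 1 l, a j * b j := by rw [prod_mul_distrib]; ring

end Telescoping

lemma sum_prod_Icc_le_mul_prod [CommSemiring R] [PartialOrder R] [IsOrderedRing R]
    {f : ℕ → R} {L : ℕ} (hf : ∀ j ∈ Icc 1 L, 1 ≤ f j) :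
    ∑ l ∈ Icc 1 L, ∏ j ∈ Icc 1 l, f j ≤ L * ∏ j ∈ Icc 1 L, f j := by
  have hle : ∀ l ∈ Icc 1 L, ∏ j ∈ Icc 1 l, f j ≤ ∏ j ∈ Icc 1 L, f j := fun l hl =>
    have hsub : Icc 1 l ⊆ Icc 1 L := Icc_subset_Icc_right (mem_Icc.mp hl).2
    prod_le_prod_of_subset_of_one_le hsub (fun j hj => zero_le_one.trans (hf j (hsub hj)))
      fun j hj _ => hf j hj
  simpa [nsmul_eq_mul] using sum_le_card_nsmul _ _ _ hle

/-- Let `A 0 : ℂ^{N×N}`, `ε ≥ 0`, and for `l = 1,…,L` let `U l`, `V l` be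
invertible with `‖(U l)⁻¹‖ ≤ 1 + u l`, `‖(V l)⁻¹‖ ≤ 1 + v l` (`u l, v l ≥ 0`), and
`A l = U l · A (l-1) · V l + E l` with `‖E l‖ ≤ ε`. Then
`‖A 0 - (U₁⁻¹⋯U_L⁻¹) · A L · (V_L⁻¹⋯V₁⁻¹)‖ ≤ ε · Σ_{l=1}^{L} Π_{j=1}^{l} (1+u_j)(1+v_j)`,
and this bound is at most `ε · L · Π_{j=1}^{L} (1+u_j)(1+v_j)` (ℓ²-operator norms). -/
theorem stmt7 (N L : ℕ) (ε : ℝ) (hε : 0 ≤ ε)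
    (A U V E : ℕ → Matrix (Fin N) (Fin N) ℂ)
    (u v : ℕ → ℝ)
    (hu : ∀ l ∈ Finset.Icc 1 L, 0 ≤ u l)
    (hv : ∀ l ∈ Finset.Icc 1 L, 0 ≤ v l)
    (hUunit : ∀ l ∈ Finset.Icc 1 L, IsUnit (U l))
    (hVunit : ∀ l ∈ Finset.Icc 1 L, IsUnit (V l))
    (hUinv : ∀ l ∈ Finset.Icc 1 L, ‖(U l)⁻¹‖ ≤ 1 + u l)
    (hVinv : ∀ l ∈ Finset.Icc 1 L, ‖(V l)⁻¹‖ ≤ 1 + v l)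
    (hrec : ∀ l ∈ Finset.Icc 1 L, A l = U l * A (l - 1) * V l + E l)
    (hE : ∀ l ∈ Finset.Icc 1 L, ‖E l‖ ≤ ε) :
    ‖A 0 - ((List.range L).map fun i => (U (i + 1))⁻¹).prod * A L *
        ((List.range L).map fun i => (V (L - i))⁻¹).prod‖ ≤
      ε * ∑ l ∈ Finset.Icc 1 L, ∏ j ∈ Finset.Icc 1 l, (1 + u j) * (1 + v j) ∧
    ε * ∑ l ∈ Finset.Icc 1 L, ∏ j ∈ Finset.Icc 1 l, (1 + u j) * (1 + v j) ≤
      ε * L * ∏ j ∈ Finset.Icc 1 L, (1 + u j) * (1 + v j) := by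
  have hU l (hl : l ∈ Icc 1 L) : (U l)⁻¹ * U l = 1 :=
    nonsing_inv_mul _ ((isUnit_iff_isUnit_det _).mp (hUunit l hl))
  have hV l (hl : l ∈ Icc 1 L) : V l * (V l)⁻¹ = 1 :=
    mul_nonsing_inv _ ((isUnit_iff_isUnit_det _).mp (hVunit l hl))
  have hgrowth : ∀ j ∈ Icc 1 L, 1 ≤ (1 + u j) * (1 + v j) := fun j hj =>
    one_le_mul_of_one_le_of_one_le (le_add_of_nonneg_right (hu j hj))
      (le_add_of_nonneg_right (hv j hj))
  refine ⟨norm_sub_ascProd_mul_descProd_le (U' := fun l => (U l)⁻¹) (V' := fun l => (V l)⁻¹)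
    hU hV hUinv hVinv hrec hE, ?_⟩
  rw [mul_assoc]
  exact mul_le_mul_of_nonneg_left (sum_prod_Icc_le_mul_prod hgrowth) hε
end

section
/- Let 0 < q < 2^{−1/3}, σ ≥ 0, M ≥ 0. Then there exists a constant C, depending only on q, σ, and M, such that for every positive integer L and every sequence of nonnegative reals e_L, e_{L−1}, …, e_1 satisfying e_L ≤ M and the two-level sparsity recurrences e_{L−2i} ≤ 2q·e_{L−2i+2} + 2σ and e_{L−2i+1} ≤ e_{L−2i} for all admissible i ≥ 1 (with e_{L−1} ≤ e_{L−2} likewise), it holds that Σ_{l=1}^{L} 2^{l}·(e_l)³ ≤ C·2^{L} and Σ_{l=1}^{L} 2^{l}·(e_l)² ≤ C·2^{L}. -/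
/-!
Choose `t > 1` with `2q ≤ t²` and `t³ < 2`; this is possible exactly because `2q < 2^{2/3}`.
With `s = t²` and `B = 2σ/(s - 1)`, the recurrence gives `e (L-2i) + B ≤ s (e (L-2i+2) + B)`,
so the even levels satisfy `e (L-2i) ≤ sⁱ (M + B)`, and each odd level is dominated by the
even level next to it. Hence `e l ≤ (M + B) t^{L-l+1}`, and `∑ 2^l (e l)^p` is bounded by
a geometric series of ratio `t^p / 2 < 1` (for `p = 2, 3`) dominated by its top term `2^L`.
-/

open Finset

lemma sum_Icc_pow_mul_pow_sub_le {b r : ℝ} (hb : 0 < b) (hr0 : 0 ≤ r) (hrb : r < b) (L : ℕ) :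
    ∑ l ∈ Icc 1 L, b ^ l * r ^ (L - l) ≤ b ^ L / (1 - r / b) := by
  have hx0 : 0 ≤ r / b := div_nonneg hr0 hb.le
  have hx1 : r / b < 1 := (div_lt_one hb).2 hrb
  have hterm : ∀ l ∈ Icc 1 L, b ^ l * r ^ (L - l) = b ^ L * (r / b) ^ (L - l) := by
    intro l hl
    rw [div_pow, mul_div_assoc', eq_div_iff (by positivity), mul_right_comm, ← pow_add,
      Nat.add_sub_of_le (mem_Icc.1 hl).2]
  calc ∑ l ∈ Icc 1 L, b ^ l * r ^ (L - l)
      = b ^ L * ∑ l ∈ Icc 1 L, (r / b) ^ (L - l) := by rw [mul_sum]; exact sum_congr rfl hterm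
    _ ≤ b ^ L * ∑ l ∈ range (L + 1), (r / b) ^ (L - l) := by
        gcongr
        intro l hl
        simp only [mem_Icc, mem_range] at hl ⊢
        omega
    _ = b ^ L * ∑ j ∈ range (L + 1), (r / b) ^ j := by
        rw [← sum_range_reflect (fun j => (r / b) ^ j) (L + 1), Nat.add_sub_cancel]
    _ ≤ b ^ L * (1 / (1 - r / b)) := by
        gcongr
        rw [range_eq_Ico, ← pow_zero (r / b)]
        exact geom_sum_Ico_le_of_lt_one hx0 hx1
    _ = b ^ L / (1 - r / b) := mul_one_div _ _

lemma add_le_pow_mul_add_of_le_mul_add {a : ℕ → ℝ} {s c : ℝ} {N : ℕ} (hs : 1 < s)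
    (h : ∀ n < N, a (n + 1) ≤ s * a n + c) :
    ∀ n ≤ N, a n + c / (s - 1) ≤ s ^ n * (a 0 + c / (s - 1)) := by
  have hc : c + c / (s - 1) = s * (c / (s - 1)) := by
    field_simp [(sub_pos.2 hs).ne']; ring
  intro n hn
  induction n with
  | zero => simp
  | succ n ih =>
    calc a (n + 1) + c / (s - 1) ≤ s * (a n + c / (s - 1)) := by
          linarith [h n (by omega)]
      _ ≤ s * (s ^ n * (a 0 + c / (s - 1))) := by gcongr; exact ih (by omega)
      _ = s ^ (n + 1) * (a 0 + c / (s - 1)) := by ring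

lemma exists_one_lt_two_mul_le_sq_cube_lt_two {q : ℝ} (hq : q < (2 : ℝ) ^ (-(1 / 3) : ℝ)) :
    ∃ t : ℝ, 1 < t ∧ 2 * q ≤ t ^ 2 ∧ t ^ 3 < 2 := by
  set c : ℝ := (2 : ℝ) ^ (1 / 3 : ℝ)
  have hc1 : 1 < c := Real.one_lt_rpow (by norm_num) (by norm_num)
  have hc3 : c ^ 3 = 2 := by
    rw [← Real.rpow_natCast, ← Real.rpow_mul (by norm_num)]
    norm_num
  have hqc : 2 * q < c ^ 2 := by
    rw [Real.rpow_neg (by norm_num), ← one_div] at hq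
    have hqc1 : q * c < 1 := (lt_div_iff₀ (by positivity)).1 hq
    nlinarith
  set t := max √(2 * q) ((1 + c) / 2)
  have ht0 : 0 ≤ t := le_max_of_le_left (Real.sqrt_nonneg _)
  have htc : t < c := max_lt ((Real.sqrt_lt' (by positivity)).2 hqc) (by linarith)
  refine ⟨t, lt_max_of_lt_right (by linarith), (Real.sqrt_le_left ht0).1 (le_max_left _ _), ?_⟩
  exact hc3 ▸ pow_lt_pow_left₀ htc ht0 (by norm_num)

def SparsityRecurrence (q σ : ℝ) (L : ℕ) (e : ℕ → ℝ) : Prop :=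
  ∀ i : ℕ, 1 ≤ i → 2 * i ≤ L →
    e (L - 2 * i) ≤ 2 * q * e (L - 2 * i + 2) + 2 * σ ∧ e (L - 2 * i + 1) ≤ e (L - 2 * i)

namespace SparsityRecurrence

variable {q σ M s t : ℝ} {L : ℕ} {e : ℕ → ℝ}

lemma even_le (hrec : SparsityRecurrence q σ L e) (hs : 1 < s) (hqs : 2 * q ≤ s) (hσ : 0 ≤ σ)
    (he : ∀ l, 0 ≤ e l) (heL : e L ≤ M) {i : ℕ} (hi : 2 * i ≤ L) :
    e (L - 2 * i) ≤ s ^ i * (M + 2 * σ / (s - 1)) := by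
  have hstep : ∀ n < L / 2, e (L - 2 * (n + 1)) ≤ s * e (L - 2 * n) + 2 * σ := by
    intro n hn
    have hidx : L - 2 * (n + 1) + 2 = L - 2 * n := by omega
    have h := (hrec (n + 1) (by omega) (by omega)).1
    rw [hidx] at h
    nlinarith [he (L - 2 * n)]
  have hB : 0 ≤ 2 * σ / (s - 1) := div_nonneg (by positivity) (by linarith)
  calc e (L - 2 * i) ≤ e (L - 2 * i) + 2 * σ / (s - 1) := le_add_of_nonneg_right hB
    _ ≤ s ^ i * (e (L - 2 * 0) + 2 * σ / (s - 1)) :=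
        add_le_pow_mul_add_of_le_mul_add (a := fun n => e (L - 2 * n)) hs hstep i (by omega)
    _ ≤ s ^ i * (M + 2 * σ / (s - 1)) := by simp only [mul_zero, Nat.sub_zero]; gcongr

lemma le_mul_pow (hrec : SparsityRecurrence q σ L e) (ht : 1 < t) (hqt : 2 * q ≤ t ^ 2)
    (hσ : 0 ≤ σ) (he : ∀ l, 0 ≤ e l) (heL : e L ≤ M) {l : ℕ} (hl : l ∈ Icc 1 L) :
    e l ≤ (M + 2 * σ / (t ^ 2 - 1)) * t ^ (L - l + 1) := by
  rw [mem_Icc] at hl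
  have hs : 1 < t ^ 2 := one_lt_pow₀ ht (by norm_num)
  have hA : 0 ≤ M + 2 * σ / (t ^ 2 - 1) :=
    (he L).trans (heL.trans (le_add_of_nonneg_right (div_nonneg (by positivity) (by linarith))))
  obtain ⟨i, hil, hi⟩ : ∃ i, 2 * i ≤ L ∧ e l ≤ e (L - 2 * i) ∧ 2 * i ≤ L - l + 1 := by
    rcases Nat.even_or_odd (L - l) with ⟨i, hi⟩ | ⟨i, hi⟩
    · exact ⟨i, by omega, by rw [show L - 2 * i = l by omega], by omega⟩
    · have h := (hrec (i + 1) (by omega) (by omega)).2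
      rw [show L - 2 * (i + 1) + 1 = l by omega] at h
      exact ⟨i + 1, by omega, h, by omega⟩
  calc e l ≤ e (L - 2 * i) := hi.1
    _ ≤ (t ^ 2) ^ i * (M + 2 * σ / (t ^ 2 - 1)) := hrec.even_le hs hqt hσ he heL hil
    _ ≤ (M + 2 * σ / (t ^ 2 - 1)) * t ^ (L - l + 1) := by
        rw [← pow_mul, mul_comm]
        gcongr
        · exact ht.le
        · exact hi.2

end SparsityRecurrence

lemma sum_Icc_two_pow_mul_pow_le {e : ℕ → ℝ} {A t : ℝ} {L p : ℕ} (he : ∀ l, 0 ≤ e l)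
    (hA : 0 ≤ A) (ht : 0 ≤ t) (htp : t ^ p < 2)
    (hbound : ∀ l ∈ Icc 1 L, e l ≤ A * t ^ (L - l + 1)) :
    ∑ l ∈ Icc 1 L, (2 : ℝ) ^ l * e l ^ p ≤ (A * t) ^ p / (1 - t ^ p / 2) * 2 ^ L := by
  calc ∑ l ∈ Icc 1 L, (2 : ℝ) ^ l * e l ^ p
      ≤ ∑ l ∈ Icc 1 L, (2 : ℝ) ^ l * ((A * t) ^ p * (t ^ p) ^ (L - l)) := by
        gcongr with l hl
        calc e l ^ p ≤ (A * t ^ (L - l + 1)) ^ p := pow_le_pow_left₀ (he l) (hbound l hl) p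
          _ = (A * t) ^ p * (t ^ p) ^ (L - l) := by ring
    _ = (A * t) ^ p * ∑ l ∈ Icc 1 L, (2 : ℝ) ^ l * (t ^ p) ^ (L - l) := by
        rw [mul_sum]; exact sum_congr rfl fun _ _ => by ring
    _ ≤ (A * t) ^ p * (2 ^ L / (1 - t ^ p / 2)) := by
        gcongr
        exact sum_Icc_pow_mul_pow_sub_le two_pos (by positivity) htp L
    _ = (A * t) ^ p / (1 - t ^ p / 2) * 2 ^ L := by ring

theorem stmt14_general (q σ M : ℝ) (hq1 : q < (2 : ℝ) ^ (-(1 / 3) : ℝ))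
    (hσ : 0 ≤ σ) (hM : 0 ≤ M) :
    ∃ C : ℝ, ∀ L : ℕ, 0 < L → ∀ e : ℕ → ℝ,
      (∀ l, 0 ≤ e l) → e L ≤ M →
      (∀ i : ℕ, 1 ≤ i → 2 * i ≤ L →
        e (L - 2 * i) ≤ 2 * q * e (L - 2 * i + 2) + 2 * σ ∧
        e (L - 2 * i + 1) ≤ e (L - 2 * i)) →
      (∑ l ∈ Finset.Icc 1 L, (2 : ℝ) ^ l * (e l) ^ 3 ≤ C * 2 ^ L ∧
       ∑ l ∈ Finset.Icc 1 L, (2 : ℝ) ^ l * (e l) ^ 2 ≤ C * 2 ^ L) := by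
  obtain ⟨t, ht1, hqt, ht3⟩ := exists_one_lt_two_mul_le_sq_cube_lt_two hq1
  have ht2 : t ^ 2 < 2 := (pow_lt_pow_right₀ ht1 (by norm_num : 2 < 3)).trans ht3
  have hs : 1 < t ^ 2 := one_lt_pow₀ ht1 (by norm_num)
  set A := M + 2 * σ / (t ^ 2 - 1)
  have hA : 0 ≤ A := add_nonneg hM (div_nonneg (by positivity) (by linarith))
  refine ⟨max ((A * t) ^ 3 / (1 - t ^ 3 / 2)) ((A * t) ^ 2 / (1 - t ^ 2 / 2)),
    fun L _ e he heL hrec => ?_⟩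
  have hbound : ∀ l ∈ Icc 1 L, e l ≤ A * t ^ (L - l + 1) :=
    fun l hl => SparsityRecurrence.le_mul_pow hrec ht1 hqt hσ he heL hl
  have h2L : (0 : ℝ) ≤ 2 ^ L := by positivity
  exact ⟨(sum_Icc_two_pow_mul_pow_le he hA (by linarith) ht3 hbound).trans
      (mul_le_mul_of_nonneg_right (le_max_left _ _) h2L),
    (sum_Icc_two_pow_mul_pow_le he hA (by linarith) ht2 hbound).trans
      (mul_le_mul_of_nonneg_right (le_max_right _ _) h2L)⟩

/-- O(N) complexity of spaLU: Let `0 < q < 2^{-1/3}`, `σ ≥ 0`, `M ≥ 0`. Then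
there is a constant `C` (depending only on `q`, `σ`, `M`) such that for every positive integer
`L` and every sequence of nonnegative reals `e` with `e L ≤ M` satisfying the two-level
sparsity recurrences `e (L-2i) ≤ 2q·e (L-2i+2) + 2σ` and `e (L-2i+1) ≤ e (L-2i)` for all
admissible `i ≥ 1` (those with `2i ≤ L`, so that in particular `e (L-1) ≤ e (L-2)`), one has
`Σ_{l=1}^{L} 2^l·(e l)³ ≤ C·2^L` and `Σ_{l=1}^{L} 2^l·(e l)² ≤ C·2^L`. -/
theorem stmt14 (q σ M : ℝ) (hq0 : 0 < q) (hq1 : q < (2 : ℝ) ^ (-(1 / 3) : ℝ))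
    (hσ : 0 ≤ σ) (hM : 0 ≤ M) :
    ∃ C : ℝ, ∀ L : ℕ, 0 < L → ∀ e : ℕ → ℝ,
      (∀ l, 0 ≤ e l) → e L ≤ M →
      (∀ i : ℕ, 1 ≤ i → 2 * i ≤ L →
        e (L - 2 * i) ≤ 2 * q * e (L - 2 * i + 2) + 2 * σ ∧
        e (L - 2 * i + 1) ≤ e (L - 2 * i)) →
      (∑ l ∈ Finset.Icc 1 L, (2 : ℝ) ^ l * (e l) ^ 3 ≤ C * 2 ^ L ∧
       ∑ l ∈ Finset.Icc 1 L, (2 : ℝ) ^ l * (e l) ^ 2 ≤ C * 2 ^ L) :=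
  stmt14_general q σ M hq1 hσ hM
end
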